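/- Let Y be a metric space and Z a normed linear space. If f : Y → Z is a Baire one function, then f is the pointwise limit of a sequence {f_n} of bounded locally Lipschitz functions f_n : Y → Z such that the pair ({f_n}, f) has UCPC. -/

import Mathlib

/-!
Write `f` as the pointwise limit of continuous `uₙ` and fix a scale `η > 0`. Call `(m, q)`
admissible when `‖u m q - u i q‖ ≤ η` for all `i ≥ m`, so that `u m q` is `η`-close to `f q`. The
points within `η` of `q` at which `u m` is `η`-close to `u m q` form an open set
`approxCover u η (m, q)` (empty for pairs that are not admissible), and these sets cover `Y` because
each `(uₙ y)` is Cauchy. The `k`-th approximant glues the values `u m q`, clamped to the ball of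
radius `k`, by a locally Lipschitz partition of unity subordinate to this cover at scale
`η = 1 / (k + 1)`; so it is bounded, locally Lipschitz, and at each point a convex combination of
values `u m q` attached to nearby admissible pairs. Near a continuity point `y₀` such a value is
close to `f q`, hence to `f y₀`, uniformly in `k`: this is UCPC. At an arbitrary point it is still
close to `f y` for large `k`, which gives pointwise convergence.
-/

open Filter Topology

/-- A function between topological spaces is Baire one if it is the pointwise
limit of a sequence of continuous functions. -/
def IsBaireOne {α β : Type*} [TopologicalSpace α] [TopologicalSpace β] (f : α → β) : Prop :=
  ∃ u : ℕ → α → β, (∀ n, Continuous (u n)) ∧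
    ∀ x, Filter.Tendsto (fun n => u n x) Filter.atTop (nhds (f x))

/-- The pair `({h n}, f)` has the property of uniform convergence at points of
continuity (UCPC): for every point `y₀` where `f` is continuous and every
`ε > 0` there are `k₀ ∈ ℕ` and a neighborhood `U` of `y₀` such that
`‖h k y - f y₀‖ < ε` for every `k ≥ k₀` and `y ∈ U`. -/
def UCPC {Y Z : Type*} [TopologicalSpace Y] [NormedAddCommGroup Z]
    (h : ℕ → Y → Z) (f : Y → Z) : Prop :=
  ∀ y₀, ContinuousAt f y₀ → ∀ ε > (0 : ℝ), ∃ k₀ : ℕ, ∃ U ∈ nhds y₀,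
    ∀ k ≥ k₀, ∀ y ∈ U, ‖h k y - f y₀‖ < ε

open Set Function Metric

section LocallyLipschitz

variable {Y : Type*} [PseudoEMetricSpace Y]

theorem LocallyLipschitz.comp_contDiffAt {𝕂 E F : Type*} [RCLike 𝕂] [NormedAddCommGroup E]
    [NormedSpace 𝕂 E] [NormedAddCommGroup F] [NormedSpace 𝕂 F] {g : Y → E} {Φ : E → F}
    (hg : LocallyLipschitz g) (hΦ : ∀ y, ContDiffAt 𝕂 1 Φ (g y)) : LocallyLipschitz (Φ ∘ g) := by
  intro x
  obtain ⟨KΦ, u, hu, hΦu⟩ := (hΦ x).exists_lipschitzOnWith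
  obtain ⟨Kg, t, ht, hgt⟩ := hg x
  exact ⟨KΦ * Kg, t ∩ g ⁻¹' u, inter_mem ht (hg.continuous.continuousAt hu),
    hΦu.comp (hgt.mono inter_subset_left) ((mapsTo_preimage g u).mono_left inter_subset_right)⟩

variable {ι E : Type*} [SeminormedAddCommGroup E]

theorem LocallyLipschitz.finset_sum {s : Finset ι} {g : ι → Y → E}
    (hg : ∀ i ∈ s, LocallyLipschitz (g i)) : LocallyLipschitz fun y => ∑ i ∈ s, g i y := by
  induction s using Finset.cons_induction with
  | empty => simpa using LocallyLipschitz.const (0 : E)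
  | cons i s _ ih =>
    simp only [Finset.sum_cons]
    exact (hg i (Finset.mem_cons_self i s)).add
      (ih fun j hj => hg j (Finset.mem_cons_of_mem hj))

theorem LocallyLipschitz.finsum {g : ι → Y → E} (hg : ∀ i, LocallyLipschitz (g i))
    (hlf : LocallyFinite fun i => support (g i)) : LocallyLipschitz fun y => ∑ᶠ i, g i y := by
  intro x
  obtain ⟨s, hs⟩ := finsum_eventually_eq_sum hlf x
  obtain ⟨K, t, ht, hK⟩ := LocallyLipschitz.finset_sum (s := s) (fun i _ => hg i) x
  refine ⟨K, t ∩ {y | ∑ᶠ i, g i y = ∑ i ∈ s, g i y}, inter_mem ht hs, fun y hy z hz => ?_⟩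
  dsimp only
  rw [hy.2, hz.2]
  exact hK hy.1 hz.1

end LocallyLipschitz

theorem IsOpen.exists_lipschitzWith_support_eq {Y : Type*} [PseudoMetricSpace Y] {s : Set Y}
    (hs : IsOpen s) : ∃ φ : Y → ℝ, LipschitzWith 1 φ ∧ 0 ≤ φ ∧ support φ = s := by
  rcases sᶜ.eq_empty_or_nonempty with h | h
  · refine ⟨1, (LipschitzWith.const 1).weaken zero_le_one, zero_le_one, ?_⟩
    rw [support_one, ← compl_empty_iff.1 h]
  · refine ⟨fun y => infDist y sᶜ, lipschitz_infDist_pt _, fun _ => infDist_nonneg, ?_⟩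
    ext y
    simp [← hs.isClosed_compl.mem_iff_infDist_zero h]

theorem exists_partitionOfUnity_locallyLipschitz {ι Y : Type*} [PseudoMetricSpace Y]
    (U : ι → Set Y) (hUo : ∀ i, IsOpen (U i)) (hU : ⋃ i, U i = univ) :
    ∃ ρ : PartitionOfUnity ι Y, (∀ i, support (ρ i) ⊆ U i) ∧ ∀ i, LocallyLipschitz (ρ i) := by
  obtain ⟨V, hVo, hV, hVlf, hVU⟩ := precise_refinement U hUo hU
  choose φ hφ hφ0 hφV using fun i => (hVo i).exists_lipschitzWith_support_eq
  have hlf : LocallyFinite fun i => support (φ i) := by simpa only [hφV] using hVlf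
  set s : Y → ℝ := fun y => ∑ᶠ i, φ i y
  have hs : LocallyLipschitz s := .finsum (fun i => (hφ i).locallyLipschitz) hlf
  have hs0 (y : Y) : 0 < s y := by
    obtain ⟨i, hi⟩ := mem_iUnion.1 (hV.symm ▸ mem_univ y : y ∈ ⋃ i, V i)
    rw [← hφV i] at hi
    exact ((hφ0 i y).lt_of_ne' hi).trans_le
      (single_le_finsum i (hlf.point_finite y) fun j => hφ0 j y)
  have hρ (i : ι) : LocallyLipschitz fun y => φ i y / s y :=
    ((hφ i).locallyLipschitz.prodMk hs).comp_contDiffAt (Φ := fun p : ℝ × ℝ => p.1 / p.2)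
      fun y => contDiffAt_fst.div contDiffAt_snd (hs0 y).ne'
  have hsupp (i : ι) : support (fun y => φ i y / s y) ⊆ V i := by
    rw [support_div, hφV i]; exact inter_subset_left
  have hsum (y : Y) : ∑ᶠ i, φ i y / s y = 1 := by
    simp only [div_eq_mul_inv]
    rw [← finsum_mul, mul_inv_cancel₀ (hs0 y).ne']
  refine ⟨⟨fun i => ⟨_, (hρ i).continuous⟩, hVlf.subset hsupp,
    fun i y => div_nonneg (hφ0 i y) (hs0 y).le, fun y _ => hsum y, fun y => (hsum y).le⟩,
    fun i => (hsupp i).trans (hVU i), hρ⟩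

theorem exists_locallyLipschitz_forall_norm_sub_le {ι Y Z : Type*} [PseudoMetricSpace Y]
    [NormedAddCommGroup Z] [NormedSpace ℝ Z] (U : ι → Set Y) (hUo : ∀ i, IsOpen (U i))
    (hU : ⋃ i, U i = univ) (z : ι → Z) :
    ∃ F : Y → Z, LocallyLipschitz F ∧
      ∀ y w r, (∀ i, y ∈ U i → ‖z i - w‖ ≤ r) → ‖F y - w‖ ≤ r := by
  obtain ⟨ρ, hρU, hρ⟩ := exists_partitionOfUnity_locallyLipschitz U hUo hU
  refine ⟨fun y => ∑ᶠ i, ρ i y • z i, .finsum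
    (fun i => ((contDiff_id (𝕜 := ℝ) (n := 1)).smul contDiff_const).locallyLipschitz.comp (hρ i))
    (ρ.locallyFinite.subset fun i => support_smul_subset_left _ _), fun y w r h => ?_⟩
  rw [← mem_closedBall_iff_norm]
  exact ρ.finsum_smul_mem_convex (g := fun i _ => z i) (mem_univ y)
    (fun i hi => mem_closedBall_iff_norm.2 (h i (hρU i hi))) (convex_closedBall w r)

section ClampNorm

variable {Z : Type*} [NormedAddCommGroup Z] [NormedSpace ℝ Z]

noncomputable def clampNorm (R : ℝ) (v : Z) : Z :=
  if ‖v‖ ≤ R then v else (R / ‖v‖) • v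

theorem norm_clampNorm_le {R : ℝ} (hR : 0 ≤ R) (v : Z) : ‖clampNorm R v‖ ≤ R := by
  unfold clampNorm
  split_ifs with h
  · exact h
  · have hv : 0 < ‖v‖ := hR.trans_lt (not_le.1 h)
    rw [norm_smul, Real.norm_of_nonneg (div_nonneg hR hv.le), div_mul_cancel₀ _ hv.ne']

theorem norm_clampNorm_sub_le {R : ℝ} {w : Z} (hw : ‖w‖ ≤ R) (v : Z) :
    ‖clampNorm R v - w‖ ≤ 2 * ‖v - w‖ := by
  unfold clampNorm
  split_ifs with h
  · linarith [norm_nonneg (v - w)]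
  · have hv : 0 < ‖v‖ := (norm_nonneg w).trans_lt (hw.trans_lt (not_le.1 h))
    have hRv : R / ‖v‖ ≤ 1 := (div_le_one hv).2 (not_le.1 h).le
    have hmove : ‖(R / ‖v‖) • v - v‖ = ‖v‖ - R := by
      rw [show (R / ‖v‖) • v - v = (R / ‖v‖ - 1) • v by rw [sub_smul, one_smul], norm_smul,
        Real.norm_of_nonpos (by linarith), neg_sub, sub_mul, one_mul, div_mul_cancel₀ _ hv.ne']
    calc ‖(R / ‖v‖) • v - w‖ ≤ ‖(R / ‖v‖) • v - v‖ + ‖v - w‖ :=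
          norm_sub_le_norm_sub_add_norm_sub _ _ _
      _ ≤ 2 * ‖v - w‖ := by linarith [norm_sub_norm_le v w]

end ClampNorm

section ApproxCover

variable {Y Z : Type*} [PseudoMetricSpace Y] [NormedAddCommGroup Z] {u : ℕ → Y → Z} {f : Y → Z}

def approxCover (u : ℕ → Y → Z) (η : ℝ) (p : ℕ × Y) : Set Y :=
  {y | (∀ i ≥ p.1, ‖u p.1 p.2 - u i p.2‖ ≤ η) ∧ dist y p.2 < η ∧ ‖u p.1 y - u p.1 p.2‖ < η}

theorem isOpen_approxCover (hu : ∀ n, Continuous (u n)) (η : ℝ) (p : ℕ × Y) :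
    IsOpen (approxCover u η p) :=
  isOpen_const.and <| (isOpen_lt (continuous_id.dist continuous_const) continuous_const).and
    (isOpen_lt ((hu p.1).sub continuous_const).norm continuous_const)

theorem iUnion_approxCover (hlim : ∀ y, Tendsto (fun n => u n y) atTop (𝓝 (f y))) {η : ℝ}
    (hη : 0 < η) : ⋃ p, approxCover u η p = univ := by
  refine eq_univ_of_forall fun y => mem_iUnion.2 ?_
  obtain ⟨m, hm⟩ := Metric.cauchySeq_iff'.1 (hlim y).cauchySeq η hη
  refine ⟨(m, y), fun i hi => ?_, by simpa using hη, by simpa using hη⟩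
  rw [← dist_eq_norm, dist_comm]
  exact (hm i hi).le

theorem norm_sub_le_of_mem_approxCover {q : Y} (hlim : Tendsto (fun n => u n q) atTop (𝓝 (f q)))
    {η : ℝ} {m : ℕ} {y : Y} (hy : y ∈ approxCover u η (m, q)) : ‖u m q - f q‖ ≤ η :=
  le_of_tendsto ((hlim.const_sub (u m q)).norm) (eventually_atTop.2 ⟨m, hy.1⟩)

/-- For large `m` compare `u m q` with `f y` through `u m y`; for small `m` through `u i₀ q` and
`u i₀ y`, using continuity of the single function `u i₀`. -/
theorem eventually_norm_sub_lt_of_mem_approxCover (hu : ∀ n, Continuous (u n)) {y : Y}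
    (hlim : Tendsto (fun n => u n y) atTop (𝓝 (f y))) {ε : ℝ} (hε : 0 < ε) :
    ∀ᶠ η in 𝓝 0, ∀ p, y ∈ approxCover u η p → ‖u p.1 p.2 - f y‖ < ε := by
  obtain ⟨i₀, hi₀⟩ := Metric.tendsto_atTop.1 hlim (ε / 3) (by positivity)
  obtain ⟨δ, hδ, hδu⟩ := Metric.continuous_iff.1 (hu i₀) y (ε / 3) (by positivity)
  filter_upwards [eventually_lt_nhds hδ, eventually_lt_nhds (by positivity : 0 < ε / 3)]
    with η hηδ hηε ⟨m, q⟩ ⟨hq, hyq, hmq⟩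
  dsimp only at hq hyq hmq
  simp only [dist_eq_norm] at hi₀ hδu
  rcases le_total m i₀ with hm | hm
  · calc ‖u m q - f y‖ ≤ ‖u m q - u i₀ q‖ + ‖u i₀ q - u i₀ y‖ + ‖u i₀ y - f y‖ := by
          linarith [norm_sub_le_norm_sub_add_norm_sub (u m q) (u i₀ q) (f y),
            norm_sub_le_norm_sub_add_norm_sub (u i₀ q) (u i₀ y) (f y)]
      _ < ε := by linarith [hq i₀ hm, hδu q (by rw [dist_comm]; linarith), hi₀ i₀ le_rfl]
  · calc ‖u m q - f y‖ ≤ ‖u m q - u m y‖ + ‖u m y - f y‖ :=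
          norm_sub_le_norm_sub_add_norm_sub _ _ _
      _ < ε := by linarith [norm_sub_rev (u m q) (u m y), hi₀ m hm]

theorem exists_mem_nhds_eventually_norm_sub_lt_of_mem_approxCover
    (hlim : ∀ y, Tendsto (fun n => u n y) atTop (𝓝 (f y))) {y₀ : Y} (hf : ContinuousAt f y₀)
    {ε : ℝ} (hε : 0 < ε) : ∃ V ∈ 𝓝 y₀,
      ∀ᶠ η in 𝓝 0, ∀ y ∈ V, ∀ p, y ∈ approxCover u η p → ‖u p.1 p.2 - f y₀‖ < ε := by
  obtain ⟨δ, hδ, hδf⟩ := Metric.continuousAt_iff.1 hf (ε / 2) (by positivity)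
  refine ⟨ball y₀ (δ / 2), ball_mem_nhds y₀ (by positivity), ?_⟩
  filter_upwards [eventually_lt_nhds (by positivity : 0 < δ / 2),
    eventually_lt_nhds (by positivity : 0 < ε / 2)]
    with η hηδ hηε y hy ⟨m, q⟩ hyq
  have hqy₀ : dist q y₀ < δ := by
    linarith [dist_triangle q y y₀, dist_comm y q, hyq.2.1, mem_ball.1 hy]
  calc ‖u m q - f y₀‖ ≤ ‖u m q - f q‖ + ‖f q - f y₀‖ := norm_sub_le_norm_sub_add_norm_sub _ _ _
    _ < ε := by
      linarith [norm_sub_le_of_mem_approxCover (hlim q) hyq, dist_eq_norm (f q) (f y₀) ▸ hδf hqy₀]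

end ApproxCover

/-- A vector-valued Baire one function is a pointwise limit of a sequence of
bounded locally Lipschitz functions with UCPC. -/
theorem baire_one_approx_locallyLipschitz_UCPC {Y Z : Type*}
    [MetricSpace Y] [NormedAddCommGroup Z] [NormedSpace ℝ Z]
    (f : Y → Z) (hf : IsBaireOne f) :
    ∃ F : ℕ → Y → Z,
      (∀ n, ∃ M : ℝ, ∀ y, ‖F n y‖ ≤ M) ∧
      (∀ n, LocallyLipschitz (F n)) ∧
      (∀ y, Tendsto (fun n => F n y) atTop (nhds (f y))) ∧
      UCPC F f := by
  obtain ⟨u, hu, hlim⟩ := hf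
  set η : ℕ → ℝ := fun k => 1 / ((k : ℝ) + 1)
  have hη : Tendsto η atTop (𝓝 0) := tendsto_one_div_add_atTop_nhds_zero_nat
  choose F hF hFnear using fun k : ℕ => exists_locallyLipschitz_forall_norm_sub_le
    (approxCover u (η k)) (isOpen_approxCover hu (η k)) (iUnion_approxCover hlim (by positivity))
    (fun p => clampNorm k (u p.1 p.2))
  have hF_lt (k : ℕ) (y : Y) {w : Z} (hw : ‖w‖ ≤ k) {ε : ℝ} (hε : 0 < ε)
      (h : ∀ p, y ∈ approxCover u (η k) p → ‖u p.1 p.2 - w‖ < ε / 4) : ‖F k y - w‖ < ε :=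
    (hFnear k y w (ε / 2) fun p hp =>
      (norm_clampNorm_sub_le hw _).trans (by linarith [h p hp])).trans_lt (by linarith)
  have hk (r : ℝ) : ∀ᶠ k : ℕ in atTop, r ≤ k := tendsto_natCast_atTop_atTop.eventually_ge_atTop r
  refine ⟨F, fun k => ⟨k, fun y => ?_⟩, hF, fun y => Metric.tendsto_nhds.2 fun ε hε => ?_,
    fun y₀ hy₀ ε hε => ?_⟩
  · simpa using hFnear k y 0 k fun p _ => by simpa using norm_clampNorm_le k.cast_nonneg _
  · filter_upwards [hη.eventually (eventually_norm_sub_lt_of_mem_approxCover hu (hlim y)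
      (by positivity : 0 < ε / 4)), hk ‖f y‖] with k hkη hkf
    rw [dist_eq_norm]
    exact hF_lt k y hkf hε hkη
  · obtain ⟨V, hV, hVη⟩ :=
      exists_mem_nhds_eventually_norm_sub_lt_of_mem_approxCover hlim hy₀ (by positivity : 0 < ε / 4)
    obtain ⟨k₀, hk₀⟩ := eventually_atTop.1 ((hη.eventually hVη).and (hk ‖f y₀‖))
    exact ⟨k₀, V, hV, fun k hk y hy => hF_lt k y (hk₀ k hk).2 hε ((hk₀ k hk).1 y hy)⟩
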